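/- If G is a nondegenerate gyrogroup (a gyrogroup possessing a nonidentity gyroautomorphism), then for each point p ∈ G there exists a nonidentity transformation T ∈ Γ_m with T(p) = p. -/

import Mathlib

/-- A gyrogroup: a set with a binary operation `op`, a left identity `e`, left inverses
`inv`, and gyroautomorphisms `gyr a b` (bijective and operation-preserving) satisfying the
left gyroassociative law and the left loop property. -/
class Gyrogroup (G : Type*) where
  /-- the gyrogroup operation `⊕` -/
  op : G → G → G
  /-- the identity element -/
  e : G
  /-- the inverse `⊖a` -/
  inv : G → G
  /-- (G1) `e ⊕ a = a` -/
  op_e : ∀ a : G, op e a = a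
  /-- (G2) `⊖a ⊕ a = e` -/
  op_inv : ∀ a : G, op (inv a) a = e
  /-- the gyroautomorphism `gyr[a, b]` -/
  gyr : G → G → G → G
  /-- (G3) `gyr[a, b]` is bijective -/
  gyr_bijective : ∀ a b : G, Function.Bijective (gyr a b)
  /-- (G3) `gyr[a, b]` preserves the operation -/
  gyr_op : ∀ a b x y : G, gyr a b (op x y) = op (gyr a b x) (gyr a b y)
  /-- (G3) the left gyroassociative law -/
  gyrassoc : ∀ a b c : G, op a (op b c) = op (op a b) (gyr a b c)
  /-- (G4) the left loop property -/
  loop : ∀ a b : G, gyr (op a b) b = gyr a b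

namespace Gyrogroup

variable {G : Type*} [Gyrogroup G]

theorem key (x z : G) : op (inv x) (op x z) = gyr (inv x) x z := by
  rw [gyrassoc, op_inv, op_e]

theorem L_injective (x : G) : Function.Injective (op x) := by
  intro z₁ z₂ h
  have h1 : gyr (inv x) x z₁ = gyr (inv x) x z₂ := by
    rw [← key, ← key, h]
  exact (gyr_bijective (inv x) x).1 h1

theorem L_surjective (x : G) : Function.Surjective (op x) := by
  intro w
  obtain ⟨z, hz⟩ := (gyr_bijective (inv x) x).2 (op (inv x) w)
  exact ⟨z, L_injective (inv x) (by rw [key, hz])⟩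

theorem L_bijective (x : G) : Function.Bijective (op x) :=
  ⟨L_injective x, L_surjective x⟩

/-- The left gyrotranslation `L_a : x ↦ a ⊕ x` as a permutation of `G`. -/
noncomputable def Lperm (a : G) : Equiv.Perm G := Equiv.ofBijective (op a) (L_bijective a)

/-- The gyroautomorphism `gyr[a, b]` as a permutation of `G`. -/
noncomputable def gyrPerm (a b : G) : Equiv.Perm G := Equiv.ofBijective (gyr a b) (gyr_bijective a b)

/-- `GYR(G)`: the subgroup of `Sym(G)` generated by all gyroautomorphisms. -/
def GYR (G : Type*) [Gyrogroup G] : Subgroup (Equiv.Perm G) :=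
  Subgroup.closure {π : Equiv.Perm G | ∃ a b : G, π = gyrPerm a b}

/-- `Γₘ = {L_a ∘ γ : a ∈ G, γ ∈ GYR(G)}`, a subgroup of `Sym(G)`. -/
def Γm (G : Type*) [Gyrogroup G] : Set (Equiv.Perm G) :=
  {T : Equiv.Perm G | ∃ a : G, ∃ γ ∈ GYR G, T = Lperm a * γ}

end Gyrogroup

/-! Conjugating a nonidentity gyroautomorphism `δ`, which fixes `e`, by the translation `L_p`
gives a nonidentity permutation fixing `L_p e = p`. It lies in `Γₘ` because elements of `GYR(G)`
intertwine translations, `δ ∘ L_b = L_{δ b} ∘ δ`, and translations compose up to a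
gyroautomorphism, `L_a ∘ L_b = L_{a ⊕ b} ∘ gyr[a, b]`. -/

namespace Gyrogroup

variable {G : Type*} [Gyrogroup G]

theorem gyr_e_left (b c : G) : gyr e b c = c :=
  (L_injective b (by simpa only [op_e] using gyrassoc e b c)).symm

theorem gyr_inv_self (b c : G) : gyr (inv b) b c = c := by
  rw [← loop, op_inv, gyr_e_left]

theorem inv_op_cancel_left (x z : G) : op (inv x) (op x z) = z := by
  rw [key, gyr_inv_self]

theorem op_e_right (a : G) : op a e = a :=
  L_injective (inv a) (by rw [inv_op_cancel_left, op_inv])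

theorem eq_e_of_op_self {u : G} (h : op u u = u) : u = e := by
  have h' := inv_op_cancel_left u u
  rwa [h, op_inv, eq_comm] at h'

@[simp]
theorem Lperm_apply (a x : G) : Lperm a x = op a x := rfl

@[simp]
theorem gyrPerm_apply (a b x : G) : gyrPerm a b x = gyr a b x := rfl

theorem gyrPerm_mem_GYR (a b : G) : gyrPerm a b ∈ GYR G :=
  Subgroup.subset_closure ⟨a, b, rfl⟩

theorem gyrPerm_ne_one {a b : G} (h : gyr a b ≠ id) : gyrPerm a b ≠ 1 :=
  fun h1 => h (funext fun x => by simpa using congrArg (· x) h1)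

theorem map_op_of_mem_GYR {δ : Equiv.Perm G} (hδ : δ ∈ GYR G) (x y : G) :
    δ (op x y) = op (δ x) (δ y) := by
  induction hδ using Subgroup.closure_induction generalizing x y with
  | mem π hπ =>
    obtain ⟨a, b, rfl⟩ := hπ
    exact gyr_op a b x y
  | one => rfl
  | mul π σ _ _ hπ hσ => simp only [Equiv.Perm.mul_apply, hσ, hπ]
  | inv π _ hπ =>
    apply π.injective
    simp only [hπ, Equiv.Perm.inv_def, Equiv.apply_symm_apply]

theorem map_e_of_mem_GYR {δ : Equiv.Perm G} (hδ : δ ∈ GYR G) : δ e = e :=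
  eq_e_of_op_self (by rw [← map_op_of_mem_GYR hδ, op_e])

theorem Lperm_inv (a : G) : (Lperm a)⁻¹ = Lperm (inv a) := by
  rw [eq_comm, eq_inv_iff_mul_eq_one]
  ext z
  exact inv_op_cancel_left a z

theorem Lperm_mul (a b : G) : Lperm a * Lperm b = Lperm (op a b) * gyrPerm a b := by
  ext z
  exact gyrassoc a b z

theorem mul_Lperm_of_mem_GYR {δ : Equiv.Perm G} (hδ : δ ∈ GYR G) (b : G) :
    δ * Lperm b = Lperm (δ b) * δ := by
  ext z
  exact map_op_of_mem_GYR hδ b z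

theorem Lperm_conj_mem_Γm {δ : Equiv.Perm G} (hδ : δ ∈ GYR G) (p : G) :
    Lperm p * δ * (Lperm p)⁻¹ ∈ Γm G := by
  refine ⟨op p (δ (inv p)), gyrPerm p (δ (inv p)) * δ,
    mul_mem (gyrPerm_mem_GYR _ _) hδ, ?_⟩
  rw [Lperm_inv, mul_assoc, mul_Lperm_of_mem_GYR hδ, ← mul_assoc, Lperm_mul, mul_assoc]

theorem Lperm_conj_apply_self {δ : Equiv.Perm G} (hδ : δ ∈ GYR G) (p : G) :
    (Lperm p * δ * (Lperm p)⁻¹) p = p := by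
  simp only [Lperm_inv, Equiv.Perm.mul_apply, Lperm_apply, op_inv, map_e_of_mem_GYR hδ,
    op_e_right]

end Gyrogroup

open Gyrogroup in
/-- If `G` is a nondegenerate gyrogroup (one possessing a nonidentity gyroautomorphism),
then every point of `G` is fixed by some nonidentity transformation in `Γₘ`. -/
theorem stmt10 {G : Type*} [Gyrogroup G] (hnd : ∃ a b : G, gyr a b ≠ id) (p : G) :
    ∃ T ∈ Γm G, T ≠ 1 ∧ T p = p := by
  obtain ⟨a, b, hab⟩ := hnd
  have hδ := gyrPerm_mem_GYR a b
  refine ⟨_, Lperm_conj_mem_Γm hδ p, ?_, Lperm_conj_apply_self hδ p⟩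
  rw [Ne, mul_inv_eq_one, mul_eq_left]
  exact gyrPerm_ne_one hab
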